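/- Let (X_1, …, X_N, Y_1, …, Y_N, Ŷ_1, …, Ŷ_N) be finite random variables with joint pmf p(x^N) · p(y^N | x^N) · ∏_{k=1}^N p(ŷ_k | y_k, x_k) (so that each Ŷ_k depends on the rest only through (X_k, Y_k), and the Ŷ_k's are conditionally independent given (X^N, Y^N)). Let S ⊆ [1:N] and d ∈ S^c, and order the elements of S arbitrarily. Then Σ_{k∈S} [ I(Ŷ_k; Ŷ(S^c ∪ {k' ∈ S : k' < k}), Y_d, X^N | X_k) − I(Ŷ_k; Y_k | X_k) ] = − I(Ŷ(S); Y(S) | X^N, Ŷ(S^c), Y_d). -/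

import Mathlib

/-!
The telescoping mutual-information identity that converts the per-node compression rate
penalties into the single term `I(Ŷ(S); Y(S) | X^N, Ŷ(Sᶜ), Y_d)` in the noisy network
coding inner bound.
-/

open scoped BigOperators Classical

namespace NNC

/-- The probability that `X` takes the value `b` under the pmf `μ` on the finite sample
space `Ω`. -/
noncomputable def prob {Ω : Type*} [Fintype Ω] {β : Type*} (μ : Ω → ℝ) (X : Ω → β)
    (b : β) : ℝ :=
  ∑ ω, if X ω = b then μ ω else 0

/-- Shannon entropy (in bits) of `X` under the pmf `μ`. -/
noncomputable def ent {Ω : Type*} [Fintype Ω] {β : Type*} [Fintype β]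
    (μ : Ω → ℝ) (X : Ω → β) : ℝ :=
  - ∑ b, prob μ X b * Real.logb 2 (prob μ X b)

/-- Conditional mutual information `I(X; Y | Z)` (in bits) under the pmf `μ`. -/
noncomputable def condMI {Ω : Type*} [Fintype Ω] {α β γ : Type*} [Fintype α] [Fintype β]
    [Fintype γ] (μ : Ω → ℝ) (X : Ω → α) (Y : Ω → β) (Z : Ω → γ) : ℝ :=
  ent μ (fun ω => (X ω, Z ω)) + ent μ (fun ω => (Y ω, Z ω))
    - ent μ (fun ω => (X ω, Y ω, Z ω)) - ent μ Z

end NNC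

open NNC
open Finset Real


section Generic
set_option linter.unusedSectionVars false
variable {Ω : Type*} [Fintype Ω] {β β' : Type*} [Fintype β] [Fintype β']

lemma prob_comp (μ : Ω → ℝ) (X : Ω → β) (g : β → β') (b' : β') :
    prob μ (fun ω => g (X ω)) b' = ∑ b, if g b = b' then prob μ X b else 0 := by
  unfold prob
  rw [eq_comm]
  calc ∑ b, (if g b = b' then ∑ ω, if X ω = b then μ ω else 0 else 0)
      = ∑ b, ∑ ω, (if X ω = b then if g b = b' then μ ω else 0 else 0) := by
        refine Finset.sum_congr rfl fun b _ => ?_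
        split_ifs with h
        · exact Finset.sum_congr rfl fun ω _ => by split_ifs <;> simp [h]
        · exact (Finset.sum_eq_zero fun ω _ => by split_ifs <;> simp [h]).symm
    _ = ∑ ω, ∑ b, (if X ω = b then if g b = b' then μ ω else 0 else 0) := Finset.sum_comm
    _ = ∑ ω, if g (X ω) = b' then μ ω else 0 := by
        refine Finset.sum_congr rfl fun ω _ => ?_
        rw [Finset.sum_ite_eq univ (X ω) (fun b => if g b = b' then μ ω else 0)]
        simp

/-- Entropy is invariant under injective relabeling. -/
lemma ent_comp_inj (μ : Ω → ℝ) (X : Ω → β) (f : β → β') (hf : Function.Injective f) :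
    ent μ (fun ω => f (X ω)) = ent μ X := by
  have hp : ∀ b, prob μ (fun ω => f (X ω)) (f b) = prob μ X b := by
    intro b
    unfold prob
    exact Finset.sum_congr rfl fun ω _ => by simp [hf.eq_iff]
  have hz : ∀ b', b' ∉ Finset.image f Finset.univ → prob μ (fun ω => f (X ω)) b' = 0 := by
    intro b' hb'
    refine Finset.sum_eq_zero fun ω _ => ?_
    rw [if_neg]
    intro h
    exact hb' (Finset.mem_image.mpr ⟨X ω, Finset.mem_univ _, h⟩)
  unfold ent
  congr 1
  rw [← Finset.sum_subset (Finset.subset_univ (Finset.image f Finset.univ))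
      (fun b' _ hb' => by rw [hz b' hb']; simp)]
  rw [Finset.sum_image (fun a _ b _ h => hf h)]
  exact Finset.sum_congr rfl fun b _ => by rw [hp]

lemma ent_ker {α κ γ : Type*} [Fintype α] [Fintype κ] [Fintype γ]
    (μ : Ω → ℝ) (X : Ω → α) (K : Ω → κ) (v : α → γ) (q : γ → κ → ℝ)
    (hq1 : ∀ g, ∑ c, q g c = 1)
    (hfac : ∀ a c, prob μ (fun ω => (X ω, K ω)) (a, c) = prob μ X a * q (v a) c) :
    ent μ (fun ω => (X ω, K ω))
      = ent μ X + ∑ g, prob μ (fun ω => v (X ω)) g *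
          (-∑ c, q g c * Real.logb 2 (q g c)) := by
  have ptwise : ∀ x y : ℝ, x * y * Real.logb 2 (x * y)
      = x * y * Real.logb 2 x + x * (y * Real.logb 2 y) := by
    intro x y
    rcases eq_or_ne x 0 with rfl | hx
    · simp
    rcases eq_or_ne y 0 with rfl | hy
    · simp
    rw [Real.logb_mul hx hy]; ring
  have key : ∀ a : α,
      ∑ c, prob μ (fun ω => (X ω, K ω)) (a, c) * Real.logb 2 (prob μ (fun ω => (X ω, K ω)) (a, c))
      = prob μ X a * Real.logb 2 (prob μ X a)
        + prob μ X a * (∑ c, q (v a) c * Real.logb 2 (q (v a) c)) := by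
    intro a
    simp only [hfac]
    have h1 : ∑ c, prob μ X a * q (v a) c * Real.logb 2 (prob μ X a * q (v a) c)
        = ∑ c, (q (v a) c * (prob μ X a * Real.logb 2 (prob μ X a))
            + prob μ X a * (q (v a) c * Real.logb 2 (q (v a) c))) :=
      Finset.sum_congr rfl fun c _ => by rw [ptwise]; ring
    rw [h1, Finset.sum_add_distrib, ← Finset.sum_mul, ← Finset.mul_sum, hq1, one_mul]
  have regroup : ∑ g, prob μ (fun ω => v (X ω)) g * (-∑ c, q g c * Real.logb 2 (q g c))
      = -∑ a, prob μ X a * (∑ c, q (v a) c * Real.logb 2 (q (v a) c)) := by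
    simp only [prob_comp μ X v]
    have h2 : ∀ g : γ, (∑ b, if v b = g then prob μ X b else 0)
          * (-∑ c, q g c * Real.logb 2 (q g c))
        = ∑ b, (if v b = g
            then -(prob μ X b * ∑ c, q (v b) c * Real.logb 2 (q (v b) c)) else 0) := by
      intro g
      rw [Finset.sum_mul]
      refine Finset.sum_congr rfl fun b _ => ?_
      split_ifs with h
      · rw [← h]; ring
      · simp
    simp only [h2]
    rw [Finset.sum_comm, ← Finset.sum_neg_distrib]
    refine Finset.sum_congr rfl fun b _ => ?_
    rw [Finset.sum_ite_eq univ (v b)]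
    simp
  unfold ent
  rw [Fintype.sum_prod_type,
      Finset.sum_congr rfl (fun a _ => key a), Finset.sum_add_distrib, regroup]
  ring
end Generic

section Specific
set_option linter.unusedSectionVars false
variable {N : ℕ} {𝒳 𝒴 Yh : Fin N → Type}
  [∀ k, Fintype (𝒳 k)] [∀ k, Fintype (𝒴 k)] [∀ k, Fintype (Yh k)]

/-- Sum over `yh` of the product kernel with coordinates in `C` pinned to `w`. -/
lemma mgen1 (ph : ∀ k, 𝒳 k → 𝒴 k → Yh k → ℝ)
    (hph1 : ∀ k x y, ∑ yh, ph k x y yh = 1)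
    (C : Finset (Fin N)) (w : ∀ j : {j // j ∈ C}, Yh j.1)
    (x : ∀ k, 𝒳 k) (y : ∀ k, 𝒴 k) :
    ∑ yh : ∀ k, Yh k, (if (fun j : {j // j ∈ C} => yh j.1) = w
        then ∏ j, ph j (x j) (y j) (yh j) else 0)
    = ∏ j ∈ C.attach, ph j.1 (x j.1) (y j.1) (w j) := by
  classical
  let F : ∀ j : Fin N, Yh j → ℝ := fun j u =>
    if h : j ∈ C then (if u = w ⟨j, h⟩ then ph j (x j) (y j) u else 0)
    else ph j (x j) (y j) u
  have hFpos : ∀ (j : Fin N) (h : j ∈ C) (u : Yh j),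
      F j u = if u = w ⟨j, h⟩ then ph j (x j) (y j) u else 0 := fun j h u => dif_pos h
  have hFneg : ∀ (j : Fin N) (h : j ∉ C) (u : Yh j),
      F j u = ph j (x j) (y j) u := fun j h u => dif_neg h
  have step1 : ∀ yh : ∀ k, Yh k,
      (if (fun j : {j // j ∈ C} => yh j.1) = w then ∏ j, ph j (x j) (y j) (yh j) else 0)
      = ∏ j, F j (yh j) := by
    intro yh
    by_cases hc : (fun j : {j // j ∈ C} => yh j.1) = w
    · rw [if_pos hc]
      refine Finset.prod_congr rfl fun j _ => ?_
      by_cases h : j ∈ C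
      · rw [hFpos j h, if_pos (congrFun hc ⟨j, h⟩)]
      · rw [hFneg j h]
    · rw [if_neg hc]
      symm
      have hex : ∃ j : {j // j ∈ C}, yh j.1 ≠ w j := by
        by_contra hcon
        push_neg at hcon
        exact hc (funext hcon)
      obtain ⟨j0, hj0⟩ := hex
      apply Finset.prod_eq_zero (Finset.mem_univ j0.1)
      rw [hFpos j0.1 j0.2, if_neg]
      exact fun h => hj0 h
  rw [Finset.sum_congr rfl fun yh _ => step1 yh, ← Fintype.prod_sum]
  have step2 : ∀ j : Fin N, ∑ u, F j u
      = if h : j ∈ C then ph j (x j) (y j) (w ⟨j, h⟩) else 1 := by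
    intro j
    by_cases h : j ∈ C
    · rw [dif_pos h, Finset.sum_congr rfl fun u _ => hFpos j h u,
        Finset.sum_ite_eq' Finset.univ (w ⟨j, h⟩) (ph j (x j) (y j))]
      simp
    · rw [dif_neg h, Finset.sum_congr rfl fun u _ => hFneg j h u]
      exact hph1 j (x j) (y j)
  rw [Finset.prod_congr rfl fun j _ => step2 j]
  rw [← Finset.prod_mul_prod_compl C]
  have h2 : ∏ i ∈ Cᶜ, (if h : i ∈ C then ph i (x i) (y i) (w ⟨i, h⟩) else 1) = 1 :=
    Finset.prod_eq_one fun j hj => dif_neg (Finset.mem_compl.mp hj)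
  have h1 : ∏ i ∈ C, (if h : i ∈ C then ph i (x i) (y i) (w ⟨i, h⟩) else 1)
      = ∏ j ∈ C.attach, ph j.1 (x j.1) (y j.1) (w j) := by
    rw [← Finset.prod_attach C]
    refine Finset.prod_congr rfl fun j _ => ?_
    rw [dif_pos j.2]
  rw [h1, h2, mul_one]

/-- Same, with the additional coordinate `k ∉ C` pinned to `c`. -/
lemma mgen2 (ph : ∀ k, 𝒳 k → 𝒴 k → Yh k → ℝ)
    (hph1 : ∀ k x y, ∑ yh, ph k x y yh = 1)
    (C : Finset (Fin N)) (k : Fin N) (hC : k ∉ C)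
    (w : ∀ j : {j // j ∈ C}, Yh j.1) (c : Yh k)
    (x : ∀ k, 𝒳 k) (y : ∀ k, 𝒴 k) :
    ∑ yh : ∀ k, Yh k, (if ((fun j : {j // j ∈ C} => yh j.1) = w ∧ yh k = c)
        then ∏ j, ph j (x j) (y j) (yh j) else 0)
    = ph k (x k) (y k) c * ∏ j ∈ C.attach, ph j.1 (x j.1) (y j.1) (w j) := by
  classical
  let F : ∀ j : Fin N, Yh j → ℝ := fun j u =>
    if h : j ∈ C then (if u = w ⟨j, h⟩ then ph j (x j) (y j) u else 0)
    else if h2 : k = j then (if u = h2 ▸ c then ph j (x j) (y j) u else 0)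
    else ph j (x j) (y j) u
  have hFpos : ∀ (j : Fin N) (h : j ∈ C) (u : Yh j),
      F j u = if u = w ⟨j, h⟩ then ph j (x j) (y j) u else 0 := fun j h u => dif_pos h
  have hFk : ∀ u : Yh k,
      F k u = if u = c then ph k (x k) (y k) u else 0 := by
    intro u
    show dite _ _ _ = _
    rw [dif_neg hC, dif_pos rfl]
  have hFneg : ∀ (j : Fin N), j ∉ C → k ≠ j → ∀ u : Yh j,
      F j u = ph j (x j) (y j) u := by
    intro j h h2 u
    show dite _ _ _ = _
    rw [dif_neg h, dif_neg h2]
  have step1 : ∀ yh : ∀ k, Yh k,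
      (if ((fun j : {j // j ∈ C} => yh j.1) = w ∧ yh k = c)
        then ∏ j, ph j (x j) (y j) (yh j) else 0)
      = ∏ j, F j (yh j) := by
    intro yh
    by_cases hc : ((fun j : {j // j ∈ C} => yh j.1) = w ∧ yh k = c)
    · rw [if_pos hc]
      refine Finset.prod_congr rfl fun j _ => ?_
      by_cases h : j ∈ C
      · rw [hFpos j h, if_pos (congrFun hc.1 ⟨j, h⟩)]
      · by_cases h2 : k = j
        · subst h2
          rw [hFk, if_pos hc.2]
        · rw [hFneg j h h2]
    · rw [if_neg hc]
      symm
      by_cases hc1 : (fun j : {j // j ∈ C} => yh j.1) = w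
      · have hc2 : yh k ≠ c := fun h => hc ⟨hc1, h⟩
        apply Finset.prod_eq_zero (Finset.mem_univ k)
        rw [hFk, if_neg hc2]
      · have hex : ∃ j : {j // j ∈ C}, yh j.1 ≠ w j := by
          by_contra hcon
          push_neg at hcon
          exact hc1 (funext hcon)
        obtain ⟨j0, hj0⟩ := hex
        apply Finset.prod_eq_zero (Finset.mem_univ j0.1)
        rw [hFpos j0.1 j0.2, if_neg]
        exact fun h => hj0 h
  rw [Finset.sum_congr rfl fun yh _ => step1 yh, ← Fintype.prod_sum]
  have step2 : ∀ j : Fin N, ∑ u, F j u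
      = if h : j ∈ C then ph j (x j) (y j) (w ⟨j, h⟩)
        else if k = j then (if h2 : k = j then ph j (x j) (y j) (h2 ▸ c) else 1) else 1 := by
    intro j
    by_cases h : j ∈ C
    · rw [dif_pos h, Finset.sum_congr rfl fun u _ => hFpos j h u,
        Finset.sum_ite_eq' Finset.univ (w ⟨j, h⟩) (ph j (x j) (y j))]
      simp
    · rw [dif_neg h]
      by_cases h2 : k = j
      · subst h2
        rw [if_pos rfl, dif_pos rfl,
          Finset.sum_congr rfl fun u _ => hFk u,
          Finset.sum_ite_eq' Finset.univ c (ph k (x k) (y k))]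
        simp
      · rw [if_neg h2, Finset.sum_congr rfl fun u _ => hFneg j h h2 u]
        exact hph1 j (x j) (y j)
  rw [Finset.prod_congr rfl fun j _ => step2 j]
  rw [← Finset.mul_prod_erase Finset.univ _ (Finset.mem_univ k)]
  have hk1 : (if h : k ∈ C then ph k (x k) (y k) (w ⟨k, h⟩)
      else if k = k then (if h2 : k = k then ph k (x k) (y k) (h2 ▸ c) else 1) else 1)
      = ph k (x k) (y k) c := by
    rw [dif_neg hC, if_pos rfl, dif_pos rfl]
  rw [hk1]
  congr 1
  have hCsub : C ⊆ Finset.univ.erase k := fun j hj =>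
    Finset.mem_erase.mpr ⟨fun h => hC (h ▸ hj), Finset.mem_univ j⟩
  rw [← Finset.prod_subset hCsub]
  · rw [← Finset.prod_attach C]
    refine Finset.prod_congr rfl fun j _ => ?_
    rw [dif_pos j.2]
  · intro j hj hjC
    rw [dif_neg hjC, if_neg (Ne.symm (Finset.mem_erase.mp hj).1)]

/-- Canonical joint entropy of `(X(A), Y(B), Ŷ(C))`. -/
noncomputable def canonH (μ : ((∀ k, 𝒳 k) × (∀ k, 𝒴 k) × (∀ k, Yh k)) → ℝ)
    (A B C : Finset (Fin N)) : ℝ :=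
  ent μ (fun ω => ((fun j : {j // j ∈ A} => ω.1 j.1),
                   (fun j : {j // j ∈ B} => ω.2.1 j.1),
                   (fun j : {j // j ∈ C} => ω.2.2 j.1)))

lemma prob_fac (μ : ((∀ k, 𝒳 k) × (∀ k, 𝒴 k) × (∀ k, Yh k)) → ℝ)
    (px : (∀ k, 𝒳 k) → ℝ) (W : (∀ k, 𝒳 k) → (∀ k, 𝒴 k) → ℝ)
    (ph : ∀ k, 𝒳 k → 𝒴 k → Yh k → ℝ)
    (hph1 : ∀ k x y, ∑ yh, ph k x y yh = 1)
    (hμ : ∀ x y yh, μ (x, y, yh) = px x * W x y * ∏ k, ph k (x k) (y k) (yh k))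
    (A B C : Finset (Fin N)) (k : Fin N) (hA : k ∈ A) (hB : k ∈ B) (hC : k ∉ C)
    (w : (∀ j : {j // j ∈ A}, 𝒳 j.1) × (∀ j : {j // j ∈ B}, 𝒴 j.1) × (∀ j : {j // j ∈ C}, Yh j.1))
    (c : Yh k) :
    prob μ (fun ω => (((fun j : {j // j ∈ A} => ω.1 j.1),
                       (fun j : {j // j ∈ B} => ω.2.1 j.1),
                       (fun j : {j // j ∈ C} => ω.2.2 j.1)), ω.2.2 k)) (w, c)
    = prob μ (fun ω => ((fun j : {j // j ∈ A} => ω.1 j.1),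
                        (fun j : {j // j ∈ B} => ω.2.1 j.1),
                        (fun j : {j // j ∈ C} => ω.2.2 j.1))) w
      * ph k (w.1 ⟨k, hA⟩) (w.2.1 ⟨k, hB⟩) c := by
  classical
  obtain ⟨wx, wy, wh⟩ := w
  unfold prob
  simp only [Fintype.sum_prod_type, Finset.sum_mul]
  refine Finset.sum_congr rfl fun x _ => ?_
  refine Finset.sum_congr rfl fun y _ => ?_
  simp only [hμ, Prod.mk.injEq]
  by_cases hxy : (fun j : {j // j ∈ A} => x j.1) = wx ∧ (fun j : {j // j ∈ B} => y j.1) = wy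
  · obtain ⟨hx, hy⟩ := hxy
    simp only [hx, hy, true_and]
    have lhs1 : ∀ yh : ∀ k, Yh k,
        (if ((fun j : {j // j ∈ C} => yh j.1) = wh ∧ yh k = c)
            then px x * W x y * ∏ j, ph j (x j) (y j) (yh j) else 0)
        = px x * W x y * (if ((fun j : {j // j ∈ C} => yh j.1) = wh ∧ yh k = c)
            then ∏ j, ph j (x j) (y j) (yh j) else 0) := by
      intro yh; split_ifs <;> ring
    have rhs1 : ∀ yh : ∀ k, Yh k,
        (if ((fun j : {j // j ∈ C} => yh j.1) = wh)
            then px x * W x y * ∏ j, ph j (x j) (y j) (yh j) else 0)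
          * ph k (wx ⟨k, hA⟩) (wy ⟨k, hB⟩) c
        = px x * W x y * ((if ((fun j : {j // j ∈ C} => yh j.1) = wh)
            then ∏ j, ph j (x j) (y j) (yh j) else 0) * ph k (wx ⟨k, hA⟩) (wy ⟨k, hB⟩) c) := by
      intro yh; split_ifs <;> ring
    rw [Finset.sum_congr rfl fun yh _ => lhs1 yh,
        Finset.sum_congr rfl fun yh _ => rhs1 yh,
        ← Finset.mul_sum, ← Finset.mul_sum, ← Finset.sum_mul,
        mgen2 ph hph1 C k hC wh c x y, mgen1 ph hph1 C wh x y]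
    have hxk : x k = wx ⟨k, hA⟩ := congrFun hx ⟨k, hA⟩
    have hyk : y k = wy ⟨k, hB⟩ := congrFun hy ⟨k, hB⟩
    rw [← hxk, ← hyk]
    ring
  · have z1 : ∀ yh : ∀ k, Yh k,
        (if (((fun j : {j // j ∈ A} => x j.1) = wx ∧ (fun j : {j // j ∈ B} => y j.1) = wy
              ∧ (fun j : {j // j ∈ C} => yh j.1) = wh) ∧ yh k = c)
            then px x * W x y * ∏ j, ph j (x j) (y j) (yh j) else 0) = 0 := by
      intro yh
      rw [if_neg]
      rintro ⟨⟨h1, h2, -⟩, -⟩; exact hxy ⟨h1, h2⟩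
    have z2 : ∀ yh : ∀ k, Yh k,
        (if ((fun j : {j // j ∈ A} => x j.1) = wx ∧ (fun j : {j // j ∈ B} => y j.1) = wy
              ∧ (fun j : {j // j ∈ C} => yh j.1) = wh)
            then px x * W x y * ∏ j, ph j (x j) (y j) (yh j) else 0)
          * ph k (wx ⟨k, hA⟩) (wy ⟨k, hB⟩) c = 0 := by
      intro yh
      rw [if_neg, zero_mul]
      rintro ⟨h1, h2, -⟩; exact hxy ⟨h1, h2⟩
    rw [Finset.sum_congr rfl fun yh _ => z1 yh, Finset.sum_congr rfl fun yh _ => z2 yh]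

/-- Expected conditional entropy of `Ŷ_k` given `(X_k, Y_k)`. -/
noncomputable def Dterm (μ : ((∀ k, 𝒳 k) × (∀ k, 𝒴 k) × (∀ k, Yh k)) → ℝ)
    (ph : ∀ k, 𝒳 k → 𝒴 k → Yh k → ℝ) (k : Fin N) : ℝ :=
  ∑ g : 𝒳 k × 𝒴 k, prob μ (fun ω => (ω.1 k, ω.2.1 k)) g *
    (-∑ c, ph k g.1 g.2 c * Real.logb 2 (ph k g.1 g.2 c))

lemma canonH_insert (μ : ((∀ k, 𝒳 k) × (∀ k, 𝒴 k) × (∀ k, Yh k)) → ℝ)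
    (px : (∀ k, 𝒳 k) → ℝ) (W : (∀ k, 𝒳 k) → (∀ k, 𝒴 k) → ℝ)
    (ph : ∀ k, 𝒳 k → 𝒴 k → Yh k → ℝ)
    (hph1 : ∀ k x y, ∑ yh, ph k x y yh = 1)
    (hμ : ∀ x y yh, μ (x, y, yh) = px x * W x y * ∏ k, ph k (x k) (y k) (yh k))
    (A B C : Finset (Fin N)) (k : Fin N) (hA : k ∈ A) (hB : k ∈ B) (hC : k ∉ C) :
    canonH μ A B (insert k C) = canonH μ A B C + Dterm μ ph k := by
  classical
  -- relabel `canonH μ A B (insert k C)` as the entropy of the pair (canon A B C, Ŷ_k)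
  have hpair : ent μ (fun ω => (((fun j : {j // j ∈ A} => ω.1 j.1),
        (fun j : {j // j ∈ B} => ω.2.1 j.1),
        (fun j : {j // j ∈ C} => ω.2.2 j.1)), ω.2.2 k))
      = canonH μ A B (insert k C) := by
    have hinj : Function.Injective
        (fun z : ((∀ j : {j // j ∈ A}, 𝒳 j.1) × (∀ j : {j // j ∈ B}, 𝒴 j.1)
            × (∀ j : {j // j ∈ insert k C}, Yh j.1)) =>
          ((z.1, z.2.1, fun j : {j // j ∈ C} => z.2.2 ⟨j.1, Finset.mem_insert_of_mem j.2⟩),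
            z.2.2 ⟨k, Finset.mem_insert_self k C⟩)) := by
      rintro ⟨za, zb, zc⟩ ⟨za', zb', zc'⟩ hz
      simp only [Prod.mk.injEq] at hz ⊢
      obtain ⟨⟨h1, h2, h3⟩, h4⟩ := hz
      refine ⟨h1, h2, ?_⟩
      funext j
      rcases j with ⟨j, hj⟩
      by_cases hjC : j ∈ C
      · exact congrFun h3 ⟨j, hjC⟩
      · have hjk : j = k := by
          rcases Finset.mem_insert.mp hj with h | h
          · exact h
          · exact absurd h hjC
        subst hjk
        exact h4
    exact ent_comp_inj μ
      (fun ω : ((∀ k, 𝒳 k) × (∀ k, 𝒴 k) × (∀ k, Yh k)) =>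
        ((fun j : {j // j ∈ A} => ω.1 j.1), (fun j : {j // j ∈ B} => ω.2.1 j.1),
         (fun j : {j // j ∈ insert k C} => ω.2.2 j.1)))
      (fun z => ((z.1, z.2.1, fun j : {j // j ∈ C} => z.2.2 ⟨j.1, Finset.mem_insert_of_mem j.2⟩),
        z.2.2 ⟨k, Finset.mem_insert_self k C⟩)) hinj
  rw [← hpair]
  rw [ent_ker μ _ _ (fun a => (a.1 ⟨k, hA⟩, a.2.1 ⟨k, hB⟩)) (fun g c => ph k g.1 g.2 c)
      (fun g => hph1 k g.1 g.2)
      (fun a c => prob_fac μ px W ph hph1 hμ A B C k hA hB hC a c)]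
  rfl

lemma exists_rmax {α : Type*} (r : α → α → Prop) [IsStrictTotalOrder α r]
    (S : Finset α) (hS : S.Nonempty) : ∃ m ∈ S, ∀ b ∈ S, ¬ r m b := by
  classical
  induction hS using Finset.Nonempty.cons_induction with
  | singleton a =>
    exact ⟨a, Finset.mem_singleton_self a, fun b hb => by
      rw [Finset.mem_singleton] at hb
      subst hb
      exact irrefl_of r _⟩
  | cons a s ha hs ih =>
    obtain ⟨m, hm, hmax⟩ := ih
    by_cases hr : r m a
    · refine ⟨a, Finset.mem_cons_self a s, ?_⟩
      intro b hb
      rcases Finset.mem_cons.mp hb with rfl | hb'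
      · exact irrefl_of r b
      · intro hab
        exact hmax b hb' (trans_of r hr hab)
    · refine ⟨m, Finset.mem_cons.mpr (Or.inr hm), ?_⟩
      intro b hb
      rcases Finset.mem_cons.mp hb with rfl | hb'
      · exact hr
      · exact hmax b hb'

lemma telescope {α : Type*} [DecidableEq α] (r : α → α → Prop) [DecidableRel r]
    [IsStrictTotalOrder α r] (G : Finset α → ℝ) (S : Finset α) :
    ∑ k ∈ S, (G (S.filter (fun k' => r k' k)) - G (insert k (S.filter (fun k' => r k' k))))
      = G ∅ - G S := by
  classical
  induction S using Finset.strongInduction with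
  | _ S ih =>
    rcases S.eq_empty_or_nonempty with rfl | hS
    · simp
    obtain ⟨m, hm, hmax⟩ := exists_rmax r S hS
    have hfilters : ∀ k ∈ S.erase m,
        S.filter (fun k' => r k' k) = (S.erase m).filter (fun k' => r k' k) := by
      intro k hk
      ext j
      simp only [Finset.mem_filter, Finset.mem_erase]
      constructor
      · rintro ⟨hj, hr⟩
        refine ⟨⟨?_, hj⟩, hr⟩
        rintro rfl
        exact hmax k (Finset.mem_of_mem_erase hk) hr
      · rintro ⟨⟨-, hj⟩, hr⟩
        exact ⟨hj, hr⟩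
    have hfm : S.filter (fun k' => r k' m) = S.erase m := by
      ext j
      simp only [Finset.mem_filter, Finset.mem_erase]
      constructor
      · rintro ⟨hj, hr⟩
        refine ⟨?_, hj⟩
        rintro rfl
        exact irrefl_of r j hr
      · rintro ⟨hne, hj⟩
        refine ⟨hj, ?_⟩
        rcases trichotomous_of r j m with h | h | h
        · exact h
        · exact absurd h hne
        · exact absurd h (hmax j hj)
    rw [← Finset.add_sum_erase _ _ hm, hfm, Finset.insert_erase hm,
        Finset.sum_congr rfl (fun k hk => by rw [hfilters k hk]),
        ih (S.erase m) (Finset.erase_ssubset hm)]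
    ring

variable (μ : ((∀ k, 𝒳 k) × (∀ k, 𝒴 k) × (∀ k, Yh k)) → ℝ)

lemma relA (k : Fin N) :
    ent μ (fun ω => (ω.2.2 k, ω.1 k)) = canonH μ {k} ∅ {k} := by
  refine ent_comp_inj μ
    (fun ω : ((∀ k, 𝒳 k) × (∀ k, 𝒴 k) × (∀ k, Yh k)) =>
      ((fun j : {j // j ∈ ({k} : Finset (Fin N))} => ω.1 j.1),
       (fun j : {j // j ∈ (∅ : Finset (Fin N))} => ω.2.1 j.1),
       (fun j : {j // j ∈ ({k} : Finset (Fin N))} => ω.2.2 j.1)))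
    (fun v => (v.2.2 ⟨k, Finset.mem_singleton_self k⟩, v.1 ⟨k, Finset.mem_singleton_self k⟩)) ?_
  rintro ⟨za, zb, zc⟩ ⟨za', zb', zc'⟩ h
  simp only [Prod.mk.injEq] at h ⊢
  refine ⟨?_, ?_, ?_⟩
  · funext j
    rcases j with ⟨j, hj⟩
    rw [Finset.mem_singleton] at hj
    subst hj
    exact h.2
  · funext j
    exact absurd j.2 (Finset.notMem_empty j.1)
  · funext j
    rcases j with ⟨j, hj⟩
    rw [Finset.mem_singleton] at hj
    subst hj
    exact h.1

lemma relD (k : Fin N) :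
    ent μ (fun ω => ω.1 k) = canonH μ {k} ∅ ∅ := by
  refine ent_comp_inj μ
    (fun ω : ((∀ k, 𝒳 k) × (∀ k, 𝒴 k) × (∀ k, Yh k)) =>
      ((fun j : {j // j ∈ ({k} : Finset (Fin N))} => ω.1 j.1),
       (fun j : {j // j ∈ (∅ : Finset (Fin N))} => ω.2.1 j.1),
       (fun j : {j // j ∈ (∅ : Finset (Fin N))} => ω.2.2 j.1)))
    (fun v => v.1 ⟨k, Finset.mem_singleton_self k⟩) ?_
  rintro ⟨za, zb, zc⟩ ⟨za', zb', zc'⟩ h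
  simp only [Prod.mk.injEq] at h ⊢
  refine ⟨?_, ?_, ?_⟩
  · funext j
    rcases j with ⟨j, hj⟩
    rw [Finset.mem_singleton] at hj
    subst hj
    exact h
  · funext j
    exact absurd j.2 (Finset.notMem_empty j.1)
  · funext j
    exact absurd j.2 (Finset.notMem_empty j.1)

lemma relE (k : Fin N) :
    ent μ (fun ω => (ω.2.1 k, ω.1 k)) = canonH μ {k} {k} ∅ := by
  refine ent_comp_inj μ
    (fun ω : ((∀ k, 𝒳 k) × (∀ k, 𝒴 k) × (∀ k, Yh k)) =>
      ((fun j : {j // j ∈ ({k} : Finset (Fin N))} => ω.1 j.1),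
       (fun j : {j // j ∈ ({k} : Finset (Fin N))} => ω.2.1 j.1),
       (fun j : {j // j ∈ (∅ : Finset (Fin N))} => ω.2.2 j.1)))
    (fun v => (v.2.1 ⟨k, Finset.mem_singleton_self k⟩, v.1 ⟨k, Finset.mem_singleton_self k⟩)) ?_
  rintro ⟨za, zb, zc⟩ ⟨za', zb', zc'⟩ h
  simp only [Prod.mk.injEq] at h ⊢
  refine ⟨?_, ?_, ?_⟩
  · funext j
    rcases j with ⟨j, hj⟩
    rw [Finset.mem_singleton] at hj
    subst hj
    exact h.2
  · funext j
    rcases j with ⟨j, hj⟩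
    rw [Finset.mem_singleton] at hj
    subst hj
    exact h.1
  · funext j
    exact absurd j.2 (Finset.notMem_empty j.1)

lemma relF (k : Fin N) :
    ent μ (fun ω => (ω.2.2 k, ω.2.1 k, ω.1 k)) = canonH μ {k} {k} {k} := by
  refine ent_comp_inj μ
    (fun ω : ((∀ k, 𝒳 k) × (∀ k, 𝒴 k) × (∀ k, Yh k)) =>
      ((fun j : {j // j ∈ ({k} : Finset (Fin N))} => ω.1 j.1),
       (fun j : {j // j ∈ ({k} : Finset (Fin N))} => ω.2.1 j.1),
       (fun j : {j // j ∈ ({k} : Finset (Fin N))} => ω.2.2 j.1)))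
    (fun v => (v.2.2 ⟨k, Finset.mem_singleton_self k⟩, v.2.1 ⟨k, Finset.mem_singleton_self k⟩,
      v.1 ⟨k, Finset.mem_singleton_self k⟩)) ?_
  rintro ⟨za, zb, zc⟩ ⟨za', zb', zc'⟩ h
  simp only [Prod.mk.injEq] at h ⊢
  refine ⟨?_, ?_, ?_⟩
  · funext j
    rcases j with ⟨j, hj⟩
    rw [Finset.mem_singleton] at hj
    subst hj
    exact h.2.2
  · funext j
    rcases j with ⟨j, hj⟩
    rw [Finset.mem_singleton] at hj
    subst hj
    exact h.2.1
  · funext j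
    rcases j with ⟨j, hj⟩
    rw [Finset.mem_singleton] at hj
    subst hj
    exact h.1

lemma relB (T : Finset (Fin N)) (d k : Fin N) :
    ent μ (fun ω => (((fun j : {j // j ∈ T} => ω.2.2 j.1), ω.2.1 d, ω.1), ω.1 k))
      = canonH μ Finset.univ {d} T := by
  refine ent_comp_inj μ
    (fun ω : ((∀ k, 𝒳 k) × (∀ k, 𝒴 k) × (∀ k, Yh k)) =>
      ((fun j : {j // j ∈ (Finset.univ : Finset (Fin N))} => ω.1 j.1),
       (fun j : {j // j ∈ ({d} : Finset (Fin N))} => ω.2.1 j.1),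
       (fun j : {j // j ∈ T} => ω.2.2 j.1)))
    (fun v => ((v.2.2, v.2.1 ⟨d, Finset.mem_singleton_self d⟩,
      fun i => v.1 ⟨i, Finset.mem_univ i⟩), v.1 ⟨k, Finset.mem_univ k⟩)) ?_
  rintro ⟨za, zb, zc⟩ ⟨za', zb', zc'⟩ h
  simp only [Prod.mk.injEq] at h ⊢
  obtain ⟨⟨h1, h2, h3⟩, -⟩ := h
  refine ⟨?_, ?_, h1⟩
  · funext j
    exact congrFun h3 j.1
  · funext j
    rcases j with ⟨j, hj⟩
    rw [Finset.mem_singleton] at hj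
    subst hj
    exact h2

lemma relC (T : Finset (Fin N)) (d k : Fin N) :
    ent μ (fun ω => (ω.2.2 k, ((fun j : {j // j ∈ T} => ω.2.2 j.1), ω.2.1 d, ω.1), ω.1 k))
      = canonH μ Finset.univ {d} (insert k T) := by
  refine ent_comp_inj μ
    (fun ω : ((∀ k, 𝒳 k) × (∀ k, 𝒴 k) × (∀ k, Yh k)) =>
      ((fun j : {j // j ∈ (Finset.univ : Finset (Fin N))} => ω.1 j.1),
       (fun j : {j // j ∈ ({d} : Finset (Fin N))} => ω.2.1 j.1),
       (fun j : {j // j ∈ insert k T} => ω.2.2 j.1)))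
    (fun v => (v.2.2 ⟨k, Finset.mem_insert_self k T⟩,
      ((fun j : {j // j ∈ T} => v.2.2 ⟨j.1, Finset.mem_insert_of_mem j.2⟩),
        v.2.1 ⟨d, Finset.mem_singleton_self d⟩, fun i => v.1 ⟨i, Finset.mem_univ i⟩),
      v.1 ⟨k, Finset.mem_univ k⟩)) ?_
  rintro ⟨za, zb, zc⟩ ⟨za', zb', zc'⟩ h
  simp only [Prod.mk.injEq] at h ⊢
  obtain ⟨h0, ⟨h1, h2, h3⟩, -⟩ := h
  refine ⟨?_, ?_, ?_⟩
  · funext j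
    exact congrFun h3 j.1
  · funext j
    rcases j with ⟨j, hj⟩
    rw [Finset.mem_singleton] at hj
    subst hj
    exact h2
  · funext j
    rcases j with ⟨j, hj⟩
    by_cases hjT : j ∈ T
    · exact congrFun h1 ⟨j, hjT⟩
    · have hjk : j = k := by
        rcases Finset.mem_insert.mp hj with h | h
        · exact h
        · exact absurd h hjT
      subst hjk
      exact h0

lemma relG (S : Finset (Fin N)) (d : Fin N) :
    ent μ (fun ω => ((fun j : {j // j ∈ S} => ω.2.2 j.1),
      (ω.1, (fun j : {j // j ∈ Sᶜ} => ω.2.2 j.1), ω.2.1 d)))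
      = canonH μ Finset.univ {d} Finset.univ := by
  refine ent_comp_inj μ
    (fun ω : ((∀ k, 𝒳 k) × (∀ k, 𝒴 k) × (∀ k, Yh k)) =>
      ((fun j : {j // j ∈ (Finset.univ : Finset (Fin N))} => ω.1 j.1),
       (fun j : {j // j ∈ ({d} : Finset (Fin N))} => ω.2.1 j.1),
       (fun j : {j // j ∈ (Finset.univ : Finset (Fin N))} => ω.2.2 j.1)))
    (fun v => ((fun j : {j // j ∈ S} => v.2.2 ⟨j.1, Finset.mem_univ j.1⟩),
      ((fun i => v.1 ⟨i, Finset.mem_univ i⟩),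
       (fun j : {j // j ∈ Sᶜ} => v.2.2 ⟨j.1, Finset.mem_univ j.1⟩),
       v.2.1 ⟨d, Finset.mem_singleton_self d⟩))) ?_
  rintro ⟨za, zb, zc⟩ ⟨za', zb', zc'⟩ h
  simp only [Prod.mk.injEq] at h ⊢
  obtain ⟨h1, h2, h3, h4⟩ := h
  refine ⟨?_, ?_, ?_⟩
  · funext j
    exact congrFun h2 j.1
  · funext j
    rcases j with ⟨j, hj⟩
    rw [Finset.mem_singleton] at hj
    subst hj
    exact h4
  · funext j
    by_cases hjS : j.1 ∈ S
    · exact congrFun h1 ⟨j.1, hjS⟩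
    · exact congrFun h3 ⟨j.1, Finset.mem_compl.mpr hjS⟩

lemma relH (S : Finset (Fin N)) (d : Fin N) :
    ent μ (fun ω => ((fun j : {j // j ∈ S} => ω.2.1 j.1),
      (ω.1, (fun j : {j // j ∈ Sᶜ} => ω.2.2 j.1), ω.2.1 d)))
      = canonH μ Finset.univ (insert d S) Sᶜ := by
  refine ent_comp_inj μ
    (fun ω : ((∀ k, 𝒳 k) × (∀ k, 𝒴 k) × (∀ k, Yh k)) =>
      ((fun j : {j // j ∈ (Finset.univ : Finset (Fin N))} => ω.1 j.1),
       (fun j : {j // j ∈ insert d S} => ω.2.1 j.1),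
       (fun j : {j // j ∈ Sᶜ} => ω.2.2 j.1)))
    (fun v => ((fun j : {j // j ∈ S} => v.2.1 ⟨j.1, Finset.mem_insert_of_mem j.2⟩),
      ((fun i => v.1 ⟨i, Finset.mem_univ i⟩), v.2.2,
       v.2.1 ⟨d, Finset.mem_insert_self d S⟩))) ?_
  rintro ⟨za, zb, zc⟩ ⟨za', zb', zc'⟩ h
  simp only [Prod.mk.injEq] at h ⊢
  obtain ⟨h1, h2, h3, h4⟩ := h
  refine ⟨?_, ?_, h3⟩
  · funext j
    exact congrFun h2 j.1
  · funext j
    rcases j with ⟨j, hj⟩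
    by_cases hjS : j ∈ S
    · exact congrFun h1 ⟨j, hjS⟩
    · have hjd : j = d := by
        rcases Finset.mem_insert.mp hj with h | h
        · exact h
        · exact absurd h hjS
      subst hjd
      exact h4

lemma relI (S : Finset (Fin N)) (d : Fin N) :
    ent μ (fun ω => ((fun j : {j // j ∈ S} => ω.2.2 j.1), (fun j : {j // j ∈ S} => ω.2.1 j.1),
      (ω.1, (fun j : {j // j ∈ Sᶜ} => ω.2.2 j.1), ω.2.1 d)))
      = canonH μ Finset.univ (insert d S) Finset.univ := by
  refine ent_comp_inj μ
    (fun ω : ((∀ k, 𝒳 k) × (∀ k, 𝒴 k) × (∀ k, Yh k)) =>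
      ((fun j : {j // j ∈ (Finset.univ : Finset (Fin N))} => ω.1 j.1),
       (fun j : {j // j ∈ insert d S} => ω.2.1 j.1),
       (fun j : {j // j ∈ (Finset.univ : Finset (Fin N))} => ω.2.2 j.1)))
    (fun v => ((fun j : {j // j ∈ S} => v.2.2 ⟨j.1, Finset.mem_univ j.1⟩),
      (fun j : {j // j ∈ S} => v.2.1 ⟨j.1, Finset.mem_insert_of_mem j.2⟩),
      ((fun i => v.1 ⟨i, Finset.mem_univ i⟩),
       (fun j : {j // j ∈ Sᶜ} => v.2.2 ⟨j.1, Finset.mem_univ j.1⟩),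
       v.2.1 ⟨d, Finset.mem_insert_self d S⟩))) ?_
  rintro ⟨za, zb, zc⟩ ⟨za', zb', zc'⟩ h
  simp only [Prod.mk.injEq] at h ⊢
  obtain ⟨h1, h2, h3, h4, h5⟩ := h
  refine ⟨?_, ?_, ?_⟩
  · funext j
    exact congrFun h3 j.1
  · funext j
    rcases j with ⟨j, hj⟩
    by_cases hjS : j ∈ S
    · exact congrFun h2 ⟨j, hjS⟩
    · have hjd : j = d := by
        rcases Finset.mem_insert.mp hj with h | h
        · exact h
        · exact absurd h hjS
      subst hjd
      exact h5
  · funext j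
    by_cases hjS : j.1 ∈ S
    · exact congrFun h1 ⟨j.1, hjS⟩
    · exact congrFun h4 ⟨j.1, Finset.mem_compl.mpr hjS⟩

lemma relJ (S : Finset (Fin N)) (d : Fin N) :
    ent μ (fun ω => (ω.1, (fun j : {j // j ∈ Sᶜ} => ω.2.2 j.1), ω.2.1 d))
      = canonH μ Finset.univ {d} Sᶜ := by
  refine ent_comp_inj μ
    (fun ω : ((∀ k, 𝒳 k) × (∀ k, 𝒴 k) × (∀ k, Yh k)) =>
      ((fun j : {j // j ∈ (Finset.univ : Finset (Fin N))} => ω.1 j.1),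
       (fun j : {j // j ∈ ({d} : Finset (Fin N))} => ω.2.1 j.1),
       (fun j : {j // j ∈ Sᶜ} => ω.2.2 j.1)))
    (fun v => ((fun i => v.1 ⟨i, Finset.mem_univ i⟩), v.2.2,
      v.2.1 ⟨d, Finset.mem_singleton_self d⟩)) ?_
  rintro ⟨za, zb, zc⟩ ⟨za', zb', zc'⟩ h
  simp only [Prod.mk.injEq] at h ⊢
  obtain ⟨h1, h2, h3⟩ := h
  refine ⟨?_, ?_, h2⟩
  · funext j
    exact congrFun h1 j.1
  · funext j
    rcases j with ⟨j, hj⟩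
    rw [Finset.mem_singleton] at hj
    subst hj
    exact h3
end Specific



/-- **Telescoping identity for the compression rate penalties.**  Let
`(X^N, Y^N, Ŷ^N)` have joint pmf `p(x^N) p(y^N|x^N) ∏_k p(ŷ_k|y_k,x_k)`, let
`S ⊆ [1:N]`, `d ∈ Sᶜ`, and let `≺` be an arbitrary strict total order on the nodes.
Then
`Σ_{k∈S} [ I(Ŷ_k; Ŷ(Sᶜ ∪ {k'∈S : k' ≺ k}), Y_d, X^N | X_k) − I(Ŷ_k; Y_k | X_k) ]
   = − I(Ŷ(S); Y(S) | X^N, Ŷ(Sᶜ), Y_d)`. -/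
theorem nnc_telescoping_identity
    {N : ℕ} (𝒳 𝒴 Yh : Fin N → Type)
    [∀ k, Fintype (𝒳 k)] [∀ k, Fintype (𝒴 k)] [∀ k, Fintype (Yh k)]
    (px : (∀ k, 𝒳 k) → ℝ) (hpx0 : ∀ x, 0 ≤ px x) (hpx1 : ∑ x, px x = 1)
    (W : (∀ k, 𝒳 k) → (∀ k, 𝒴 k) → ℝ)
    (hW0 : ∀ x y, 0 ≤ W x y) (hW1 : ∀ x, ∑ y, W x y = 1)
    (ph : ∀ k, 𝒳 k → 𝒴 k → Yh k → ℝ) (hph0 : ∀ k x y yh, 0 ≤ ph k x y yh)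
    (hph1 : ∀ k x y, ∑ yh, ph k x y yh = 1)
    (μ : (∀ k, 𝒳 k) × (∀ k, 𝒴 k) × (∀ k, Yh k) → ℝ)
    (hμ : ∀ x y yh, μ (x, y, yh) = px x * W x y * ∏ k, ph k (x k) (y k) (yh k))
    (r : Fin N → Fin N → Prop) [DecidableRel r] [IsStrictTotalOrder (Fin N) r]
    (S : Finset (Fin N)) (d : Fin N) (hd : d ∈ Sᶜ) :
    ∑ k ∈ S,
      (condMI μ
          (fun ω => ω.2.2 k)
          (fun ω => ((fun j : {j // j ∈ Sᶜ ∪ S.filter (fun k' => r k' k)} => ω.2.2 j.1),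
                     ω.2.1 d, ω.1))
          (fun ω => ω.1 k)
        - condMI μ (fun ω => ω.2.2 k) (fun ω => ω.2.1 k) (fun ω => ω.1 k))
    = - condMI μ
        (fun ω => fun j : {j // j ∈ S} => ω.2.2 j.1)
        (fun ω => fun j : {j // j ∈ S} => ω.2.1 j.1)
        (fun ω => (ω.1, (fun j : {j // j ∈ Sᶜ} => ω.2.2 j.1), ω.2.1 d)) := by
  classical
  have hins : ∀ k : Fin N, canonH μ {k} {k} {k} = canonH μ {k} {k} ∅ + Dterm μ ph k := by
    intro k
    have h := canonH_insert μ px W ph hph1 hμ {k} {k} ∅ k (Finset.mem_singleton_self k)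
      (Finset.mem_singleton_self k) (Finset.notMem_empty k)
    rwa [show insert k (∅ : Finset (Fin N)) = {k} from rfl] at h
  have hterm : ∀ k ∈ S,
      (condMI μ
          (fun ω => ω.2.2 k)
          (fun ω => ((fun j : {j // j ∈ Sᶜ ∪ S.filter (fun k' => r k' k)} => ω.2.2 j.1),
                     ω.2.1 d, ω.1))
          (fun ω => ω.1 k)
        - condMI μ (fun ω => ω.2.2 k) (fun ω => ω.2.1 k) (fun ω => ω.1 k))
      = (canonH μ Finset.univ {d} (Sᶜ ∪ S.filter (fun k' => r k' k))
          - canonH μ Finset.univ {d} (Sᶜ ∪ insert k (S.filter (fun k' => r k' k))))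
        + Dterm μ ph k := by
    intro k hk
    simp only [condMI]
    rw [relA μ k, relD μ k, relE μ k, relF μ k,
        relB μ (Sᶜ ∪ S.filter (fun k' => r k' k)) d k,
        relC μ (Sᶜ ∪ S.filter (fun k' => r k' k)) d k,
        hins k, Finset.union_insert]
    ring
  rw [Finset.sum_congr rfl hterm, Finset.sum_add_distrib]
  have htel := telescope r (fun T => canonH μ Finset.univ {d} (Sᶜ ∪ T)) S
  rw [htel]
  have hstep5 : ∀ C : Finset (Fin N), C ⊆ S →
      canonH μ Finset.univ (insert d S) (Sᶜ ∪ C)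
        = canonH μ Finset.univ (insert d S) Sᶜ + ∑ k ∈ C, Dterm μ ph k := by
    intro C
    induction C using Finset.induction_on with
    | empty => intro _; simp
    | @insert k C hkC ih =>
      intro hsub
      have hkS : k ∈ S := hsub (Finset.mem_insert_self k C)
      have hCS : C ⊆ S := fun x hx => hsub (Finset.mem_insert_of_mem hx)
      have hknot : k ∉ Sᶜ ∪ C := by
        rw [Finset.mem_union]
        rintro (h | h)
        · exact (Finset.mem_compl.mp h) hkS
        · exact hkC h
      rw [Finset.union_insert,
          canonH_insert μ px W ph hph1 hμ Finset.univ (insert d S) (Sᶜ ∪ C) k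
            (Finset.mem_univ k) (Finset.mem_insert_of_mem hkS) hknot,
          ih hCS, Finset.sum_insert hkC]
      ring
  have hSu : Sᶜ ∪ S = Finset.univ := by
    rw [Finset.union_comm]
    simp
  have hI : canonH μ Finset.univ (insert d S) Finset.univ
      = canonH μ Finset.univ (insert d S) Sᶜ + ∑ k ∈ S, Dterm μ ph k := by
    have h := hstep5 S (le_refl S)
    rwa [hSu] at h
  simp only [condMI]
  rw [relG μ S d, relH μ S d, relI μ S d, relJ μ S d, hI, Finset.union_empty, hSu]
  ring
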